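/- arXiv:2401.11810 — 2 statements merged into one kernel-verified Lean document; each statement's English description precedes it below -/
import Mathlib

section
/- In multiclass classification with 0-1 nonconformity score, if the corrected training accuracy satisfies P̂_tr ≥ n_α/n_cal + β/√n_tr, then the normalized expected CP set size satisfies Λ/|𝒴| ≤ 1/|𝒴| + (1 − 1/|𝒴|)·exp(−n_cal · d_KL(n_α/n_cal || P̂_tr − β/√n_tr)). This follows by instantiating the general bound ∫_{R_min}^{R_max} e^{−n_cal d_KL(n_α/n_cal || F̂(r) − β/√n_tr)} γ(r) dr + γ(R_min)R_min with the discrete score taking values {0,1}, γ(0) = 1/|𝒴|, γ(1) = 1 − 1/|𝒴|, F̂(0) = 0, F̂(1) = P̂_tr, and R_min = 0. -/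
/-- The cdf of a binomial random variable: `P[Bin(m,p) ≤ k]`. -/
noncomputable def binomCdf (m k : ℕ) (p : ℝ) : ℝ :=
  ∑ j ∈ Finset.range (k + 1), (m.choose j : ℝ) * p ^ j * (1 - p) ^ (m - j)

/-- The binary Kullback–Leibler divergence `d_KL(a‖b)`. -/
noncomputable def dKL (a b : ℝ) : ℝ :=
  a * Real.log (a / b) + (1 - a) * Real.log ((1 - a) / (1 - b))

/-!
The lower tail of `Bin(n, p)` obeys the Chernoff bound `P[Bin(n,p) ≤ k] ≤ exp(-n d_KL(k/n ‖ q))`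
for every `q` with `k/n ≤ q ≤ p`: for `0 ≤ t ≤ 1` and `j ≤ k` we have `t^k ≤ t^j`, so `t^k` times
the cdf is dominated by the generating function `(p t + 1 - p)^n ≤ (q t + 1 - q)^n`, and the
tilt `t = a(1-q)/(q(1-a))` with `a = k/n` turns this into `exp(-n d_KL(a ‖ q))`.
For the 0-1 score the expected set size has only two layers: the layer `r = 0` contributes at most
`1/|𝒴|`, and the layer `r = 1` is the binomial lower tail at `F(1) ≥ P̂_tr - β/√n_tr`.
-/

open Real

section Binomial

variable {n k : ℕ} {p q t : ℝ}

theorem pow_mul_binomCdf_le (hk : k ≤ n) (ht0 : 0 ≤ t) (ht1 : t ≤ 1) (hp0 : 0 ≤ p)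
    (hp1 : p ≤ 1) : t ^ k * binomCdf n k p ≤ (p * t + (1 - p)) ^ n := by
  have h1p : 0 ≤ 1 - p := sub_nonneg.2 hp1
  rw [binomCdf, Finset.mul_sum]
  calc ∑ j ∈ Finset.range (k + 1), t ^ k * ((n.choose j : ℝ) * p ^ j * (1 - p) ^ (n - j))
      ≤ ∑ j ∈ Finset.range (k + 1), t ^ j * ((n.choose j : ℝ) * p ^ j * (1 - p) ^ (n - j)) :=
        Finset.sum_le_sum fun j hj => mul_le_mul_of_nonneg_right
          (pow_le_pow_of_le_one ht0 ht1 (Nat.lt_succ_iff.mp (Finset.mem_range.mp hj)))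
          (by positivity)
    _ ≤ ∑ j ∈ Finset.range (n + 1), t ^ j * ((n.choose j : ℝ) * p ^ j * (1 - p) ^ (n - j)) :=
        Finset.sum_le_sum_of_subset_of_nonneg (Finset.range_subset_range.mpr (by omega))
          fun j _ _ => by positivity
    _ = (p * t + (1 - p)) ^ n := by
        rw [add_pow]
        exact Finset.sum_congr rfl fun j _ => by ring

theorem binomCdf_le_one (hk : k ≤ n) (hp0 : 0 ≤ p) (hp1 : p ≤ 1) : binomCdf n k p ≤ 1 := by
  simpa using pow_mul_binomCdf_le hk zero_le_one le_rfl hp0 hp1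

theorem pow_mul_binomCdf_le_of_le (hk : k ≤ n) (ht0 : 0 ≤ t) (ht1 : t ≤ 1) (hqp : q ≤ p)
    (hp1 : p ≤ 1) (hp0 : 0 ≤ p) : t ^ k * binomCdf n k p ≤ (q * t + (1 - q)) ^ n :=
  (pow_mul_binomCdf_le hk ht0 ht1 hp0 hp1).trans <|
    pow_le_pow_left₀ (by nlinarith) (by nlinarith) n

end Binomial

theorem dKL_one_right (a : ℝ) : dKL a 1 = a * log a := by
  simp [dKL]

theorem exp_neg_mul_dKL_zero_left (n : ℕ) {q : ℝ} (hq : q < 1) :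
    exp (-(n : ℝ) * dKL 0 q) = (1 - q) ^ n := by
  rw [dKL, zero_mul, zero_add, sub_zero, one_mul, one_div, log_inv, neg_mul_neg,
    exp_nat_mul, exp_log (sub_pos.2 hq)]

theorem exp_neg_mul_dKL {n k : ℕ} {a q : ℝ} (hk : k ≤ n) (hka : (n : ℝ) * a = k)
    (ha0 : 0 < a) (ha1 : a < 1) (hq0 : 0 < q) (hq1 : q < 1) :
    exp (-(n : ℝ) * dKL a q) = (q / a) ^ k * ((1 - q) / (1 - a)) ^ (n - k) := by
  have hlog : -(n : ℝ) * dKL a q =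
      k * log (q / a) + ((n - k : ℕ) : ℝ) * log ((1 - q) / (1 - a)) := by
    rw [dKL, ← inv_div q, ← inv_div (1 - q), log_inv, log_inv, Nat.cast_sub hk, ← hka]
    ring
  rw [hlog, exp_add, exp_nat_mul, exp_nat_mul, exp_log (by positivity),
    exp_log (div_pos (sub_pos.2 hq1) (sub_pos.2 ha1))]

theorem binomCdf_le_exp_neg_mul_dKL_of_pos {n k : ℕ} {a p q : ℝ} (hk : k ≤ n)
    (hka : (n : ℝ) * a = k) (ha0 : 0 < a) (haq : a ≤ q) (hq1 : q < 1) (hqp : q ≤ p)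
    (hp1 : p ≤ 1) : binomCdf n k p ≤ exp (-(n : ℝ) * dKL a q) := by
  have hq0 : 0 < q := ha0.trans_le haq
  have h1q : 0 < 1 - q := sub_pos.2 hq1
  have h1a : 0 < 1 - a := by linarith
  -- the minimiser over `t` of `(q t + 1 - q)^n / t^k`
  set t : ℝ := a * (1 - q) / (q * (1 - a)) with ht
  have ht0 : 0 < t := by positivity
  have ht1 : t ≤ 1 := by
    rw [ht, div_le_one (by positivity)]
    nlinarith
  have hgen : q * t + (1 - q) = (1 - q) / (1 - a) := by
    rw [ht]; field_simp; ring
  have hexp : exp (-(n : ℝ) * dKL a q) * t ^ k = ((1 - q) / (1 - a)) ^ n := by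
    have hqat : q / a * t = (1 - q) / (1 - a) := by rw [ht]; field_simp
    rw [exp_neg_mul_dKL hk hka ha0 (by linarith) hq0 hq1, mul_right_comm, ← mul_pow, hqat,
      ← pow_add, Nat.add_sub_cancel' hk]
  refine le_of_mul_le_mul_left ?_ (pow_pos ht0 k)
  calc t ^ k * binomCdf n k p ≤ (q * t + (1 - q)) ^ n :=
        pow_mul_binomCdf_le_of_le hk ht0.le ht1 hqp hp1 (hq0.le.trans hqp)
    _ = t ^ k * exp (-(n : ℝ) * dKL a q) := by rw [hgen, ← hexp, mul_comm]

theorem binomCdf_le_exp_neg_mul_dKL {n k : ℕ} {p q : ℝ} (hk : k ≤ n)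
    (haq : (k : ℝ) / n ≤ q) (hqp : q ≤ p) (hp1 : p ≤ 1) :
    binomCdf n k p ≤ exp (-(n : ℝ) * dKL ((k : ℝ) / n) q) := by
  have ha0 : 0 ≤ (k : ℝ) / n := by positivity
  have hp0 : 0 ≤ p := ha0.trans (haq.trans hqp)
  rcases (hqp.trans hp1).eq_or_lt with rfl | hq1
  · rw [dKL_one_right]
    refine (binomCdf_le_one hk hp0 hp1).trans (one_le_exp ?_)
    nlinarith [mul_log_nonpos ha0 haq]
  rcases k.eq_zero_or_pos with rfl | hk0
  · rw [Nat.cast_zero, zero_div, exp_neg_mul_dKL_zero_left n hq1]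
    simpa using pow_mul_binomCdf_le_of_le (t := 0) hk le_rfl zero_le_one hqp hp1 hp0
  have hn : (n : ℝ) ≠ 0 := Nat.cast_ne_zero.2 (by omega)
  exact binomCdf_le_exp_neg_mul_dKL_of_pos hk (mul_div_cancel₀ _ hn) (by positivity) haq hq1
    hqp hp1

theorem stmt_9_general (Y ncal ntr : ℕ)
    (nα : ℕ) (hnα : nα ≤ ncal)
    (β Ptr Λ p0 p1 F1 : ℝ) (hβ : 0 ≤ β)
    (hacc : (nα : ℝ) / ncal + β / Real.sqrt ntr ≤ Ptr)
    (hp0 : p0 ≤ 1)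
    (hF1lb : Ptr - β / Real.sqrt ntr ≤ F1) (hF1ub : F1 ≤ 1)
    (hp1 : p1 = binomCdf ncal nα F1)
    (hΛ : Λ / Y = (1 / (Y : ℝ)) * p0 + (1 - 1 / (Y : ℝ)) * p1) :
    Λ / Y ≤ 1 / (Y : ℝ) +
      (1 - 1 / (Y : ℝ)) *
        Real.exp (-(ncal : ℝ) * dKL ((nα : ℝ) / ncal) (Ptr - β / Real.sqrt ntr)) := by
  have hslack : 0 ≤ β / Real.sqrt ntr := div_nonneg hβ (Real.sqrt_nonneg _)
  have hchernoff := binomCdf_le_exp_neg_mul_dKL hnα (by linarith) hF1lb hF1ub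
  have hweight : 0 ≤ 1 - 1 / (Y : ℝ) := by
    rw [one_div, sub_nonneg]; exact Nat.cast_inv_le_one Y
  rw [hΛ, hp1]
  exact add_le_add (mul_le_of_le_one_right (by positivity) hp0)
    (mul_le_mul_of_nonneg_left hchernoff hweight)

/-- Multiclass classification with 0-1 score: if the corrected training accuracy satisfies
`P̂_tr ≥ n_α/n_cal + β/√n_tr`, then the normalized expected CP set size satisfies
`Λ/|𝒴| ≤ 1/|𝒴| + (1 − 1/|𝒴|)·exp(−n_cal·d_KL(n_α/n_cal ‖ P̂_tr − β/√n_tr))`.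
Here the expected set size is instantiated via the layer-cake representation over the
two-point score space `{0,1}` with `γ(0)=1/|𝒴|`, `γ(1)=1−1/|𝒴|`, `F̂(0)=0`, `F̂(1)=P̂_tr`,
`R_min = 0`, `p0 = P[Q_{1-α} ≥ 0] ≤ 1`, and
`p1 = P[Q_{1-α} ≥ 1] = P[Bin(n_cal, F(1)) ≤ n_α]` with `F(1) ≥ P̂_tr − β/√n_tr`. -/
theorem stmt_9 (Y ncal ntr : ℕ) (hY : 2 ≤ Y) (hncal : 0 < ncal) (hntr : 0 < ntr)
    (nα : ℕ) (hnα : nα ≤ ncal)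
    (β Ptr Λ p0 p1 F1 : ℝ) (hβ : 0 ≤ β) (hPtr : Ptr ∈ Set.Icc (0:ℝ) 1)
    (hacc : (nα : ℝ) / ncal + β / Real.sqrt ntr ≤ Ptr)
    (hp0 : p0 ≤ 1) (hp00 : 0 ≤ p0)
    (hF1lb : Ptr - β / Real.sqrt ntr ≤ F1) (hF1ub : F1 ≤ 1)
    (hp1 : p1 = binomCdf ncal nα F1)
    (hΛ : Λ / Y = (1 / (Y : ℝ)) * p0 + (1 - 1 / (Y : ℝ)) * p1) :
    Λ / Y ≤ 1 / (Y : ℝ) +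
      (1 - 1 / (Y : ℝ)) *
        Real.exp (-(ncal : ℝ) * dKL ((nα : ℝ) / ncal) (Ptr - β / Real.sqrt ntr)) :=
  stmt_9_general Y ncal ntr nα hnα β Ptr Λ p0 p1 F1 hβ hacc hp0 hF1lb hF1ub hp1 hΛ
end

section
/- (Marginal coverage of split conformal prediction) Let R_1,…,R_m, R_{m+1} be exchangeable real-valued random variables, and let Q_{1−α} be the ⌈(m+1)(1−α)⌉-th smallest value among R_1,…,R_m (equal to +∞ if ⌈(m+1)(1−α)⌉ > m). Then P[R_{m+1} ≤ Q_{1−α}] ≥ 1 − α. -/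
/-!
Let the strict rank of `R_i` be the number of scores `R_j` strictly below it. Since `R_{m+1}` is
not strictly below itself, `R_{m+1} ≤ Q_{1-α}` says exactly that the strict rank of `R_{m+1}`
among all `m + 1` scores is `< k`. By exchangeability every `R_i` has this property with the same
probability `p`, and pointwise at least `k` of the scores have it, so
`(m + 1) p ≥ k ≥ (m + 1)(1 - α)`.
-/

open MeasureTheory Finset
open scoped ENNReal

theorem List.Pairwise.le_getElem_iff_countP_lt_le {α : Type*} [LinearOrder α] {l : List α}
    (hl : l.Pairwise (· ≤ ·)) (x : α) {j : ℕ} (hj : j < l.length) :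
    x ≤ l[j] ↔ l.countP (· < x) ≤ j := by
  induction l generalizing j with
  | nil => simp at hj
  | cons a L ih =>
    obtain ⟨ha, hL⟩ := List.pairwise_cons.1 hl
    by_cases hxa : x ≤ a
    · have hle : ∀ y ∈ a :: L, x ≤ y := by grind
      have hcount : (a :: L).countP (· < x) = 0 := by
        simpa [List.countP_eq_zero] using hle
      simpa [hcount] using hle _ (List.getElem_mem hj)
    · cases j with
      | zero => simp [hxa]
      | succ j => simp [lt_of_not_ge hxa, ih hL (j := j) (by simpa using hj)]

theorem Multiset.le_sort_getElem_iff_countP_lt_le {α : Type*} [LinearOrder α] (s : Multiset α)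
    (x : α) {j : ℕ} (hj : j < (s.sort (· ≤ ·)).length) :
    x ≤ (s.sort (· ≤ ·))[j] ↔ s.countP (· < x) ≤ j := by
  rw [(s.pairwise_sort _).le_getElem_iff_countP_lt_le x hj, ← Multiset.coe_countP,
    Multiset.sort_eq]

section Rank
variable {ι α : Type*} [Fintype ι] [LinearOrder α]

def strictRank (v : ι → α) (i : ι) : ℕ := #{j | v j < v i}

theorem strictRank_comp_perm (v : ι → α) (σ : Equiv.Perm ι) (i : ι) :
    strictRank (v ∘ σ) i = strictRank v (σ i) :=
  card_equiv σ (by simp)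

/- A minimal element outside the set `{i | strictRank v i < k}` has all strictly smaller elements
inside it, so the set cannot have fewer than `k` elements. -/
theorem le_card_strictRank_lt (v : ι → α) {k : ℕ} (hk : k ≤ Fintype.card ι) :
    k ≤ #{i | strictRank v i < k} := by
  by_contra! hS
  have hT : ({i | k ≤ strictRank v i} : Finset ι).Nonempty := by
    rw [← card_pos]
    have := card_filter_add_card_filter_not (s := univ) (fun i => strictRank v i < k)
    simp only [not_lt, card_univ] at this
    omega
  obtain ⟨i, hi, hmin⟩ := exists_min_image _ v hT
  have : strictRank v i ≤ #{i | strictRank v i < k} := card_le_card fun j hj => by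
    simp only [mem_filter, mem_univ, true_and] at hj ⊢
    by_contra! hjk
    exact (hmin j (by simpa using hjk)).not_gt hj
  simp only [mem_filter, mem_univ, true_and] at hi
  omega

theorem countP_ofFn_castSucc_lt_last {m : ℕ} (v : Fin (m + 1) → α) :
    (List.ofFn fun i : Fin m => v i.castSucc : Multiset α).countP (· < v (Fin.last m)) =
      strictRank v (Fin.last m) := by
  rw [← Fin.univ_val_map, Multiset.countP_map, ← Finset.filter_val, ← Finset.card_def,
    strictRank, card_filter, card_filter, Fin.sum_univ_castSucc]
  simp

theorem measurableSet_strictRank_lt [TopologicalSpace α] [OrderClosedTopology α]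
    [SecondCountableTopology α] [MeasurableSpace α] [OpensMeasurableSpace α] (i : ι) (k : ℕ) :
    MeasurableSet {v : ι → α | strictRank v i < k} := by
  have : Measurable fun v : ι → α => strictRank v i := by
    simp only [strictRank, card_filter]
    exact Finset.measurable_sum _ fun j _ => Measurable.ite
      (measurableSet_lt (measurable_pi_apply j) (measurable_pi_apply i))
      measurable_const measurable_const
  exact this measurableSet_Iio

end Rank

open scoped Classical in
theorem natCast_mul_le_sum_measure {Ω ι : Type*} [MeasurableSpace Ω] (μ : Measure Ω)
    (s : Finset ι) {A : ι → Set Ω} (hA : ∀ i ∈ s, MeasurableSet (A i)) {k : ℕ}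
    (h : ∀ ω, k ≤ #{i ∈ s | ω ∈ A i}) :
    k * μ Set.univ ≤ ∑ i ∈ s, μ (A i) :=
  calc k * μ Set.univ = ∫⁻ _, (k : ℝ≥0∞) ∂μ := by simp
    _ ≤ ∫⁻ ω, ∑ i ∈ s, (A i).indicator 1 ω ∂μ := lintegral_mono fun ω => by
        simpa [Set.indicator_apply] using h ω
    _ = ∑ i ∈ s, μ (A i) := by
        rw [lintegral_finsetSum _ fun i hi => measurable_one.indicator (hA i hi)]
        exact sum_congr rfl fun i hi => lintegral_indicator_one (hA i hi)

theorem ENNReal.ofReal_le_of_mul_le_natCast {n k : ℕ} (hn : n ≠ 0) {c : ℝ} {x : ℝ≥0∞}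
    (hc : n * c ≤ k) (hk : (k : ℝ≥0∞) ≤ n * x) : ENNReal.ofReal c ≤ x :=
  calc ENNReal.ofReal c = ENNReal.ofReal (c * n) / n := by
        rw [ENNReal.ofReal_mul' n.cast_nonneg, ENNReal.ofReal_natCast,
          ENNReal.mul_div_cancel_right (by simpa) (by simp)]
    _ ≤ k / n := by
        gcongr; simpa [mul_comm] using ENNReal.ofReal_le_ofReal hc
    _ ≤ x := ENNReal.div_le_of_le_mul' hk

def Exchangeable {Ω ι α : Type*} [MeasurableSpace Ω] [MeasurableSpace α] (μ : Measure Ω)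
    (R : Ω → ι → α) : Prop :=
  ∀ σ : Equiv.Perm ι, μ.map (fun ω => R ω ∘ σ) = μ.map R

namespace Exchangeable

variable {Ω ι α : Type*} [MeasurableSpace Ω] [Fintype ι] [DecidableEq ι] [LinearOrder α]
  [TopologicalSpace α] [OrderClosedTopology α] [SecondCountableTopology α]
  [MeasurableSpace α] [OpensMeasurableSpace α] {μ : Measure Ω} {R : Ω → ι → α}

theorem measure_strictRank_lt_eq (hR : Exchangeable μ R) (hmeas : Measurable R) (k : ℕ)
    (i j : ι) :
    μ {ω | strictRank (R ω) j < k} = μ {ω | strictRank (R ω) i < k} := by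
  let σ := Equiv.swap j i
  have hσ : Measurable fun ω => R ω ∘ σ := measurable_pi_lambda _ fun l =>
    (measurable_pi_apply (σ l)).comp hmeas
  have hpre : {ω | strictRank (R ω) j < k} =
      (fun ω => R ω ∘ σ) ⁻¹' {v | strictRank v i < k} := by
    ext ω
    simp [strictRank_comp_perm, σ]
  rw [hpre, ← Measure.map_apply hσ (measurableSet_strictRank_lt i k), hR σ,
    Measure.map_apply hmeas (measurableSet_strictRank_lt i k)]
  rfl

theorem natCast_mul_le_card_mul_measure_strictRank_lt (hR : Exchangeable μ R)
    (hmeas : Measurable R) {k : ℕ} (hk : k ≤ Fintype.card ι) (i : ι) :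
    k * μ Set.univ ≤ Fintype.card ι * μ {ω | strictRank (R ω) i < k} := by
  have hA : ∀ j, MeasurableSet {ω | strictRank (R ω) j < k} := fun j =>
    hmeas (measurableSet_strictRank_lt j k)
  calc k * μ Set.univ ≤ ∑ j, μ {ω | strictRank (R ω) j < k} :=
        natCast_mul_le_sum_measure μ univ (fun j _ => hA j) fun ω => by
          simpa using le_card_strictRank_lt (R ω) hk
    _ = Fintype.card ι * μ {ω | strictRank (R ω) i < k} := by
        simp [hR.measure_strictRank_lt_eq hmeas k i]

end Exchangeable

open scoped Classical in
/-- Marginal coverage of split conformal prediction: if `R_1,…,R_m,R_{m+1}` are exchangeable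
and `Q_{1-α}` is the `⌈(m+1)(1-α)⌉`-th smallest among `R_1,…,R_m` (`+∞` if
`⌈(m+1)(1-α)⌉ > m`), then `P[R_{m+1} ≤ Q_{1-α}] ≥ 1 - α`. -/
theorem stmt_12 {Ω : Type*} [MeasurableSpace Ω] (μ : Measure Ω) [IsProbabilityMeasure μ]
    (m : ℕ) (R : Ω → Fin (m + 1) → ℝ) (hmeas : Measurable R)
    (hexch : ∀ σ : Equiv.Perm (Fin (m + 1)),
      Measure.map (fun ω => R ω ∘ σ) μ = Measure.map R μ)
    (α : ℝ) (hα : α ∈ Set.Ioo (0:ℝ) 1)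
    (k : ℕ) (hk : (k : ℤ) = ⌈((m : ℝ) + 1) * (1 - α)⌉) :
    ENNReal.ofReal (1 - α) ≤
      μ {ω | (R ω (Fin.last m) : EReal) ≤
        if h : k - 1 < m then
          ((((List.ofFn fun i : Fin m => R ω i.castSucc : Multiset ℝ).sort
              (· ≤ ·))[k - 1]'(by simpa using h) : ℝ) : EReal)
        else ⊤} := by
  obtain ⟨hα0, hα1⟩ := hα
  have hk1 : 1 ≤ k := by
    have : (0 : ℤ) < k := hk ▸ Int.ceil_pos.2 (by nlinarith)
    omega
  by_cases h : k - 1 < m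
  · simp only [dif_pos h, EReal.coe_le_coe_iff, Multiset.le_sort_getElem_iff_countP_lt_le,
      countP_ofFn_castSucc_lt_last, Nat.le_sub_one_iff_lt hk1]
    have hcount := Exchangeable.natCast_mul_le_card_mul_measure_strictRank_lt hexch hmeas
      (k := k) (by simp; omega) (Fin.last m)
    rw [measure_univ, mul_one, Fintype.card_fin] at hcount
    refine ENNReal.ofReal_le_of_mul_le_natCast m.succ_ne_zero ?_ hcount
    exact_mod_cast hk ▸ Int.le_ceil (((m : ℝ) + 1) * (1 - α))
  · simp only [dif_neg h, le_top, Set.ofPred_true, measure_univ]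
    exact ENNReal.ofReal_le_one.2 (by linarith)
end
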